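/- arXiv:1012.5106 — 7 statements merged into one kernel-verified Lean document; each statement's English description precedes it below -/
import Mathlib

section
/- Let A ∈ ℂ^{N×N} be Hermitian positive semidefinite, let n be a natural number, and let τ ≥ 0 satisfy τ · ‖A‖₂ ≤ 1. Then the matrix g_τ = Σ_{k=0}^{n} (1/k!) (−τ A)^k satisfies ‖g_τ‖₂ ≤ 1. -/
open scoped Matrix ComplexOrder Matrix.Norms.L2Operator

/-!
By the continuous functional calculus the truncated exponential is `p(a)` with
`p(x) = ∑_{k ≤ n} (-τx)^k / k!`, and for `0 ≤ a` the spectrum lies in `[0, ‖a‖]`, so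
`‖p(a)‖ ≤ sup {|p(x)| : 0 ≤ τx ≤ 1}`. For `0 ≤ y ≤ 1` the terms `y^k / k!` decrease, so the
alternating sum `∑ (-y)^k / k!` lies between `0` and its first term `1`.
-/

open Finset Nat

lemma sum_range_neg_one_pow_mul_mem_Icc {R : Type*} [CommRing R] [LinearOrder R]
    [IsStrictOrderedRing R] {f : ℕ → R} (hf : Antitone f) (hf0 : ∀ k, 0 ≤ f k) (n : ℕ) :
    ∑ k ∈ range n, (-1) ^ k * f k ∈ Set.Icc 0 (f 0) := by
  induction n generalizing f with
  | zero => simpa using hf0 0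
  | succ n ih =>
    obtain ⟨hlo, hhi⟩ := ih (f := fun k ↦ f (k + 1)) (fun _ _ h ↦ hf (by omega)) (fun _ ↦ hf0 _)
    have hf10 : f 1 ≤ f 0 := hf zero_le_one
    rw [sum_range_succ']
    simp only [pow_succ, mul_neg_one, neg_mul, sum_neg_distrib, pow_zero, one_mul]
    constructor <;> linarith

lemma abs_sum_range_neg_pow_div_factorial_le_one {y : ℝ} (hy0 : 0 ≤ y) (hy1 : y ≤ 1) (n : ℕ) :
    |∑ k ∈ range n, (-y) ^ k / k !| ≤ 1 := by
  have hanti : Antitone fun k ↦ y ^ k / k ! := antitone_nat_of_succ_le fun k ↦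
    div_le_div₀ (by positivity) (pow_le_pow_of_le_one hy0 hy1 k.le_succ) (by positivity)
      (mod_cast factorial_le k.le_succ)
  obtain ⟨hlo, hhi⟩ := sum_range_neg_one_pow_mul_mem_Icc hanti (fun _ ↦ by positivity) n
  simp only [pow_zero, factorial_zero, cast_one, div_one] at hhi
  simp only [← mul_div_assoc, ← neg_one_mul y, mul_pow] at hlo hhi ⊢
  exact abs_le.mpr ⟨by linarith, hhi⟩

section CStarAlgebra

variable {A : Type*} [CStarAlgebra A]

lemma le_norm_of_mem_spectrum {a : A} {x : ℝ} (hx : x ∈ spectrum ℝ a) : x ≤ ‖a‖ := by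
  have : Nontrivial A := not_subsingleton_iff_nontrivial.mp fun _ ↦ by
    simp [spectrum.of_subsingleton] at hx
  exact (le_abs_self x).trans (spectrum.norm_le_norm_of_mem hx)

lemma sum_inv_factorial_smul_pow_eq_cfc {a : A} (ha : IsSelfAdjoint a) (t : ℝ) (n : ℕ) :
    ∑ k ∈ range n, (k ! : ℂ)⁻¹ • ((t : ℂ) • a) ^ k =
      cfc (fun x : ℝ ↦ ∑ k ∈ range n, (t * x) ^ k / k !) a := by
  rw [← sum_fn, cfc_sum _ a _ fun k _ ↦ by fun_prop]
  refine sum_congr rfl fun k _ ↦ ?_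
  simp_rw [div_eq_inv_mul]
  rw [cfc_const_mul _ _ a, cfc_pow _ k a, cfc_const_mul_id t a, ← Complex.coe_smul,
    ← Complex.coe_smul]
  push_cast
  rfl

theorem norm_sum_inv_factorial_smul_neg_smul_pow_le_one [PartialOrder A] [StarOrderedRing A]
    {a : A} (ha : 0 ≤ a) {τ : ℝ} (hτ : 0 ≤ τ) (hτa : τ * ‖a‖ ≤ 1) (n : ℕ) :
    ‖∑ k ∈ range n, (k ! : ℂ)⁻¹ • ((-(τ : ℂ)) • a) ^ k‖ ≤ 1 := by
  rw [← Complex.ofReal_neg, sum_inv_factorial_smul_pow_eq_cfc ha.isSelfAdjoint]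
  refine norm_cfc_le zero_le_one fun x hx ↦ ?_
  have hx0 : 0 ≤ x := spectrum_nonneg_of_nonneg ha hx
  have hτx : τ * x ≤ 1 := (mul_le_mul_of_nonneg_left (le_norm_of_mem_spectrum hx) hτ).trans hτa
  simpa only [neg_mul, Real.norm_eq_abs] using
    abs_sum_range_neg_pow_div_factorial_le_one (mul_nonneg hτ hx0) hτx n

end CStarAlgebra

open scoped MatrixOrder

/-- If `A` is Hermitian positive semidefinite and `0 ≤ τ` with `τ · ‖A‖₂ ≤ 1`, then the
truncated exponential `g_τ = ∑_{k=0}^{n} (1/k!) (−τ A)^k` satisfies `‖g_τ‖₂ ≤ 1`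
(ℓ²-operator norm). -/
theorem truncated_exp_matrix_norm_le_one {N : ℕ} (A : Matrix (Fin N) (Fin N) ℂ)
    (hA : A.PosSemidef) (n : ℕ) (τ : ℝ) (hτ : 0 ≤ τ) (hτA : τ * ‖A‖ ≤ 1) :
    ‖∑ k ∈ Finset.range (n + 1), ((Nat.factorial k : ℂ))⁻¹ • ((-(τ : ℂ)) • A) ^ k‖ ≤ 1 :=
  norm_sum_inv_factorial_smul_neg_smul_pow_le_one hA.nonneg hτ hτA (n + 1)
end

section
/- Let A ∈ ℂ^{N×N} be Hermitian with all eigenvalues contained in the interval [κ, μ] where 0 < κ ≤ μ, let n ≥ 1 be a natural number, and let τ > 0 satisfy τ · μ ≤ 1. Then the matrix g_τ = Σ_{k=0}^{n} (1/k!) (−τ A)^k satisfies ‖g_τ‖₂ ≤ Σ_{k=0}^{n} (1/k!) (−τ κ)^k < 1. -/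
/-!
On `[0, 1]` the terms `t ^ k / k!` decrease, so the alternating partial sums
`p_n(t) = ∑_{k ≤ n} (-t) ^ k / k!` lie between `0` and `1 - t + t ^ 2 / 2 < 1`. Since
`p_{n+1}' = -p_n`, each `p_n` is moreover decreasing on `[0, 1]`. Via the continuous functional
calculus, `g_τ = p_n(τ A)`, whose norm is the largest value of `|p_n(τ λ)|` over the eigenvalues
`λ ∈ [κ, μ]`; as `τ λ ∈ [τ κ, 1]`, this is at most `p_n(τ κ)`.
-/

open scoped Matrix Matrix.Norms.L2Operator Nat
open Finset

theorem Antitone.sum_range_alternating_mem_Icc {R : Type*} [Ring R] [PartialOrder R]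
    [IsOrderedAddMonoid R] {f : ℕ → R} (hf : Antitone f) (hf0 : ∀ k, 0 ≤ f k) (n : ℕ) :
    ∑ i ∈ range n, (-1) ^ i * f i ∈ Set.Icc 0 (f 0) := by
  induction n generalizing f with
  | zero => simpa using hf0 0
  | succ n ih =>
    obtain ⟨h0, h1⟩ := ih (f := fun k ↦ f (k + 1)) (fun a b hab ↦ hf (by omega)) fun k ↦ hf0 _
    simp only [sum_range_succ', pow_succ, mul_neg_one, neg_mul, sum_neg_distrib, pow_zero,
      one_mul, neg_add_eq_sub]
    exact ⟨sub_nonneg.2 (h1.trans (hf (Nat.zero_le 1))), sub_le_self _ h0⟩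

theorem antitone_pow_div_factorial {t : ℝ} (ht0 : 0 ≤ t) (ht1 : t ≤ 1) :
    Antitone fun k ↦ t ^ k / k ! :=
  antitone_nat_of_succ_le fun k ↦ div_le_div₀ (pow_nonneg ht0 k)
    (pow_le_pow_of_le_one ht0 ht1 k.le_succ) (by positivity) (mod_cast Nat.factorial_le k.le_succ)

noncomputable def truncatedExp (n : ℕ) (x : ℝ) : ℝ :=
  ∑ k ∈ range (n + 1), x ^ k / k !

theorem truncatedExp_neg_eq_sum_alternating (n : ℕ) (t : ℝ) :
    truncatedExp n (-t) = ∑ k ∈ range (n + 1), (-1) ^ k * (t ^ k / k !) :=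
  sum_congr rfl fun k _ ↦ by rw [neg_pow, mul_div_assoc]

theorem truncatedExp_neg_nonneg (n : ℕ) {t : ℝ} (ht0 : 0 ≤ t) (ht1 : t ≤ 1) :
    0 ≤ truncatedExp n (-t) := by
  rw [truncatedExp_neg_eq_sum_alternating]
  exact ((antitone_pow_div_factorial ht0 ht1).sum_range_alternating_mem_Icc
    (fun k ↦ by positivity) _).1

theorem truncatedExp_neg_lt_one {n : ℕ} (hn : 1 ≤ n) {t : ℝ} (ht0 : 0 < t) (ht1 : t ≤ 1) :
    truncatedExp n (-t) < 1 := by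
  obtain ⟨m, rfl⟩ := Nat.exists_eq_add_of_le' hn
  have hshift : Monotone fun k : ℕ ↦ k + 1 + 1 := fun a b h ↦ by dsimp only; omega
  have htail := ((antitone_pow_div_factorial ht0.le ht1).comp_monotone hshift
    |>.sum_range_alternating_mem_Icc (fun k ↦ by dsimp; positivity) m).2
  have hsign (i : ℕ) : (-1 : ℝ) ^ (i + 1 + 1) = (-1) ^ i := by ring
  rw [truncatedExp_neg_eq_sum_alternating, sum_range_succ', sum_range_succ']
  simp only [hsign, Function.comp_apply] at htail ⊢
  norm_num at htail ⊢
  nlinarith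

theorem hasDerivAt_truncatedExp_succ (n : ℕ) (x : ℝ) :
    HasDerivAt (truncatedExp (n + 1)) (truncatedExp n x) x := by
  have hterm (k : ℕ) :
      HasDerivAt (fun y : ℝ ↦ y ^ (k + 1) / ((k + 1)! : ℝ)) (x ^ k / k !) x := by
    refine ((hasDerivAt_pow (k + 1) x).div_const _).congr_deriv ?_
    rw [Nat.factorial_succ]
    push_cast
    field_simp
  have hfun : truncatedExp (n + 1) =
      fun y : ℝ ↦ 1 + ∑ k ∈ range (n + 1), y ^ (k + 1) / ((k + 1)! : ℝ) := by
    ext y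
    rw [truncatedExp, sum_range_succ', add_comm]
    simp
  rw [hfun]
  exact (HasDerivAt.fun_sum fun k _ ↦ hterm k).const_add 1

theorem truncatedExp_monotoneOn_Icc (n : ℕ) : MonotoneOn (truncatedExp n) (Set.Icc (-1) 0) := by
  cases n with
  | zero => intro x _ y _ _; simp [truncatedExp]
  | succ n =>
    have hd : Differentiable ℝ (truncatedExp (n + 1)) :=
      fun x ↦ (hasDerivAt_truncatedExp_succ n x).differentiableAt
    refine monotoneOn_of_deriv_nonneg (convex_Icc _ _) hd.continuous.continuousOn
      hd.differentiableOn fun x hx ↦ ?_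
    rw [interior_Icc] at hx
    rw [(hasDerivAt_truncatedExp_succ n x).deriv, ← neg_neg x]
    exact truncatedExp_neg_nonneg n (by linarith [hx.2]) (by linarith [hx.1])

theorem abs_truncatedExp_neg_le (n : ℕ) {s t : ℝ} (hs : 0 ≤ s) (hst : s ≤ t) (ht : t ≤ 1) :
    |truncatedExp n (-t)| ≤ truncatedExp n (-s) := by
  rw [abs_of_nonneg (truncatedExp_neg_nonneg n (hs.trans hst) ht)]
  exact truncatedExp_monotoneOn_Icc n ⟨by linarith, by linarith⟩ ⟨by linarith, by linarith⟩
    (neg_le_neg hst)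

theorem cfc_truncatedExp_const_mul {A : Type*} {p : A → Prop} [Ring A] [StarRing A]
    [TopologicalSpace A] [Algebra ℝ A] [ContinuousFunctionalCalculus ℝ A p]
    (n : ℕ) (c : ℝ) (a : A) (ha : p a := by cfc_tac) :
    cfc (fun x ↦ truncatedExp n (c * x)) a = ∑ k ∈ range (n + 1), (k ! : ℝ)⁻¹ • (c • a) ^ k := by
  simp only [truncatedExp, div_eq_inv_mul, ← Finset.sum_fn]
  rw [cfc_sum _ _ _ fun k _ ↦ by fun_prop]
  refine sum_congr rfl fun k _ ↦ ?_
  rw [cfc_const_mul _ fun x ↦ (c * x) ^ k, cfc_pow (c * ·) k a, cfc_const_mul_id c a]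

/-- If `A` is Hermitian with all eigenvalues in `[κ, μ]`, `0 < κ ≤ μ`, `n ≥ 1` and `0 < τ`
with `τ · μ ≤ 1`, then `g_τ = ∑_{k=0}^{n} (1/k!) (−τ A)^k` satisfies
`‖g_τ‖₂ ≤ ∑_{k=0}^{n} (1/k!) (−τ κ)^k < 1`. -/
theorem truncated_exp_matrix_norm_lt_one {N : ℕ} (A : Matrix (Fin N) (Fin N) ℂ)
    (hA : A.IsHermitian) (κ μ : ℝ) (hκ : 0 < κ) (hκμ : κ ≤ μ)
    (heig : ∀ i, hA.eigenvalues i ∈ Set.Icc κ μ)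
    (n : ℕ) (hn : 1 ≤ n) (τ : ℝ) (hτ : 0 < τ) (hτμ : τ * μ ≤ 1) :
    ‖∑ k ∈ Finset.range (n + 1), ((Nat.factorial k : ℂ))⁻¹ • ((-(τ : ℂ)) • A) ^ k‖
        ≤ ∑ k ∈ Finset.range (n + 1), (-(τ * κ)) ^ k / (Nat.factorial k : ℝ) ∧
      ∑ k ∈ Finset.range (n + 1), (-(τ * κ)) ^ k / (Nat.factorial k : ℝ) < 1 := by
  have hτκ : 0 < τ * κ := mul_pos hτ hκ
  have hτκ1 : τ * κ ≤ 1 := (mul_le_mul_of_nonneg_left hκμ hτ.le).trans hτμ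
  refine ⟨?_, truncatedExp_neg_lt_one hn hτκ hτκ1⟩
  have hcfc : ∑ k ∈ range (n + 1), ((k ! : ℂ))⁻¹ • ((-(τ : ℂ)) • A) ^ k =
      cfc (fun x ↦ truncatedExp n (-τ * x)) A := by
    rw [cfc_truncatedExp_const_mul n (-τ) A (Matrix.isHermitian_iff_isSelfAdjoint.mp hA)]
    push_cast [← Complex.coe_smul]
    rfl
  rw [hcfc]
  refine norm_cfc_le (truncatedExp_neg_nonneg n hτκ.le hτκ1) fun x hx ↦ ?_
  obtain ⟨i, rfl⟩ := hA.spectrum_real_eq_range_eigenvalues ▸ hx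
  obtain ⟨hκi, hiμ⟩ := heig i
  rw [neg_mul, Real.norm_eq_abs]
  exact abs_truncatedExp_neg_le n hτκ.le (mul_le_mul_of_nonneg_left hκi hτ.le)
    ((mul_le_mul_of_nonneg_left hiμ hτ.le).trans hτμ)
end

section
/- Let A ∈ ℂ^{N×N} be Hermitian with all eigenvalues contained in the interval [κ, μ] where 0 < κ ≤ μ, let n ≥ 1 be a natural number, and let τ > 0 satisfy τ · μ ≤ 1. Set g_τ = Σ_{k=0}^{n} (1/k!) (−τ A)^k and v = Σ_{k=0}^{n} (1/k!) (−τ κ)^k, so 0 ≤ v < 1. Then for every u₀ ∈ ℂ^N and all natural numbers k, j: ‖g_τ^{k+j} u₀ − g_τ^{k} u₀‖ ≤ v^k · ‖g_τ^{j} − I‖₂ · ‖u₀‖ ≤ 2 v^k ‖u₀‖ (Euclidean norm on vectors); in particular the sequence (g_τ^{k} u₀)_{k≥0} is a Cauchy sequence. -/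
/-!
With `p(t) = ∑_{k ≤ n} (-t)^k / k!`, the Taylor polynomial of `e^{-t}`, the matrix `g` is `p(τA)`
in the functional calculus of `A`, so `‖g^k‖ ≤ (max_λ |p(τλ)|)^k` over the eigenvalues `λ ∈ [κ, μ]`.
On `[0, 1]` one has `1 - t ≤ p_m(t) ≤ 1` for every `m` and `p_{m+1}' = -p_m`, so for `n ≥ 1` the
polynomial `p` is nonnegative and strictly decreasing there; as `0 < τκ ≤ τλ ≤ 1` this gives
`|p(τλ)| ≤ p(τκ) = v < p(0) = 1`. The estimate then follows from `g^{k+j} - g^k = g^k (g^j - 1)`,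
and its case `j = 1` is a geometric bound on consecutive steps.
-/

open scoped Matrix Matrix.Norms.L2Operator

/-- The Euclidean (ℓ²) norm of a vector in `ℂ^N`. -/
noncomputable def euclNorm {N : ℕ} (x : Fin N → ℂ) : ℝ :=
  ‖(WithLp.equiv 2 (Fin N → ℂ)).symm x‖

open Set
open scoped Nat

noncomputable def truncExpNeg (m : ℕ) (t : ℝ) : ℝ :=
  ∑ k ∈ Finset.range (m + 1), (-t) ^ k / k !

@[simp]
lemma truncExpNeg_zero_right (m : ℕ) : truncExpNeg m 0 = 1 := by
  simp [truncExpNeg, Finset.sum_range_succ']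

lemma hasDerivAt_neg_pow_succ_div_factorial (k : ℕ) (t : ℝ) :
    HasDerivAt (fun s : ℝ ↦ (-s) ^ (k + 1) / ((k + 1)! : ℝ)) (-((-t) ^ k / k !)) t := by
  refine (((hasDerivAt_pow (k + 1) (-t)).comp t (hasDerivAt_neg t)).div_const
    ((k + 1)! : ℝ)).congr_deriv ?_
  rw [Nat.factorial_succ]
  push_cast
  field_simp

lemma hasDerivAt_truncExpNeg_succ (m : ℕ) (t : ℝ) :
    HasDerivAt (truncExpNeg (m + 1)) (-truncExpNeg m t) t := by
  have h : truncExpNeg (m + 1) =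
      fun s ↦ ∑ k ∈ Finset.range (m + 1), (-s) ^ (k + 1) / ((k + 1)! : ℝ) + 1 := by
    funext s
    simp [truncExpNeg, Finset.sum_range_succ' _ (m + 1)]
  rw [h, truncExpNeg, ← Finset.sum_neg_distrib]
  exact (HasDerivAt.fun_sum fun k _ ↦ hasDerivAt_neg_pow_succ_div_factorial k t).add_const 1

lemma differentiable_truncExpNeg_succ (m : ℕ) : Differentiable ℝ (truncExpNeg (m + 1)) :=
  fun t ↦ (hasDerivAt_truncExpNeg_succ m t).differentiableAt

lemma truncExpNeg_mem_Icc (m : ℕ) {t : ℝ} (ht : t ∈ Icc 0 1) :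
    truncExpNeg m t ∈ Icc (1 - t) 1 := by
  induction m generalizing t with
  | zero => simpa [truncExpNeg] using ht.1
  | succ m ih =>
    have hd := differentiable_truncExpNeg_succ m
    have hd' : Differentiable ℝ (fun x ↦ truncExpNeg (m + 1) x + x) := hd.add differentiable_id
    have hanti : AntitoneOn (truncExpNeg (m + 1)) (Icc 0 1) := by
      refine antitoneOn_of_deriv_nonpos (convex_Icc 0 1) hd.continuous.continuousOn
        hd.differentiableOn fun x hx ↦ ?_
      rw [interior_Icc] at hx
      rw [(hasDerivAt_truncExpNeg_succ m x).deriv]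
      linarith [(ih (Ioo_subset_Icc_self hx)).1, hx.2]
    have hmono : MonotoneOn (fun x ↦ truncExpNeg (m + 1) x + x) (Icc 0 1) := by
      refine monotoneOn_of_deriv_nonneg (convex_Icc 0 1) hd'.continuous.continuousOn
        hd'.differentiableOn fun x hx ↦ ?_
      rw [interior_Icc] at hx
      rw [((hasDerivAt_truncExpNeg_succ m x).fun_add (hasDerivAt_id' x)).deriv]
      linarith [(ih (Ioo_subset_Icc_self hx)).2]
    have h0 : (0 : ℝ) ∈ Icc 0 1 := ⟨le_rfl, zero_le_one⟩
    constructor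
    · linarith [hmono h0 ht ht.1, truncExpNeg_zero_right (m + 1)]
    · simpa using hanti h0 ht ht.1

lemma strictAntiOn_truncExpNeg_succ (m : ℕ) : StrictAntiOn (truncExpNeg (m + 1)) (Icc 0 1) := by
  have hd := differentiable_truncExpNeg_succ m
  refine strictAntiOn_of_deriv_neg (convex_Icc 0 1) hd.continuous.continuousOn fun x hx ↦ ?_
  rw [interior_Icc] at hx
  rw [(hasDerivAt_truncExpNeg_succ m x).deriv]
  linarith [(truncExpNeg_mem_Icc m (Ioo_subset_Icc_self hx)).1, hx.2]

lemma truncExpNeg_succ_lt_one (m : ℕ) {s : ℝ} (hs : s ∈ Ioc 0 1) : truncExpNeg (m + 1) s < 1 := by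
  simpa using strictAntiOn_truncExpNeg_succ m ⟨le_rfl, zero_le_one⟩ (Ioc_subset_Icc_self hs) hs.1

lemma abs_truncExpNeg_succ_le (m : ℕ) {s t : ℝ} (hs : 0 ≤ s) (hst : s ≤ t) (ht : t ≤ 1) :
    |truncExpNeg (m + 1) t| ≤ truncExpNeg (m + 1) s := by
  have hs1 : s ∈ Icc 0 1 := ⟨hs, hst.trans ht⟩
  have ht0 : t ∈ Icc 0 1 := ⟨hs.trans hst, ht⟩
  refine abs_le.2 ⟨?_, (strictAntiOn_truncExpNeg_succ m).antitoneOn hs1 ht0 hst⟩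
  linarith [(truncExpNeg_mem_Icc (m + 1) hs1).1, (truncExpNeg_mem_Icc (m + 1) ht0).1]

lemma Matrix.IsHermitian.sum_inv_factorial_smul_pow_eq_cfc {n : Type*} [Fintype n]
    [DecidableEq n] {A : Matrix n n ℂ} (hA : A.IsHermitian) (m : ℕ) (τ : ℝ) :
    ∑ k ∈ Finset.range (m + 1), ((k ! : ℂ))⁻¹ • ((-(τ : ℂ)) • A) ^ k
      = cfc (fun x ↦ truncExpNeg m (τ * x)) A := by
  have hf : (fun x ↦ truncExpNeg m (τ * x)) =
      ∑ k ∈ Finset.range (m + 1), fun x ↦ ((k ! : ℝ)⁻¹ * (-τ) ^ k) * x ^ k := by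
    ext x
    simp only [truncExpNeg, Finset.sum_apply]
    refine Finset.sum_congr rfl fun k _ ↦ ?_
    ring
  rw [hf, cfc_sum _ _ _ (fun _ _ ↦ by fun_prop)]
  refine Finset.sum_congr rfl fun k _ ↦ ?_
  rw [cfc_const_mul _ _ _ (by fun_prop), cfc_pow_id A k, smul_pow, smul_smul,
    ← Complex.coe_smul]
  push_cast
  ring_nf

lemma Matrix.IsHermitian.norm_sum_inv_factorial_smul_pow_pow_le {n : Type*} [Fintype n]
    [DecidableEq n] {A : Matrix n n ℂ} (hA : A.IsHermitian) {κ μ τ : ℝ} (hτ : 0 ≤ τ)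
    (hκ : 0 ≤ κ) (hκμ : κ ≤ μ) (hτμ : τ * μ ≤ 1) (heig : ∀ i, hA.eigenvalues i ∈ Icc κ μ)
    (m k : ℕ) :
    ‖(∑ j ∈ Finset.range (m + 2), ((j ! : ℂ))⁻¹ • ((-(τ : ℂ)) • A) ^ j) ^ k‖
      ≤ truncExpNeg (m + 1) (τ * κ) ^ k := by
  have hτκ : 0 ≤ τ * κ := mul_nonneg hτ hκ
  have hbound {t : ℝ} (ht : t ∈ Icc κ μ) :
      |truncExpNeg (m + 1) (τ * t)| ≤ truncExpNeg (m + 1) (τ * κ) :=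
    abs_truncExpNeg_succ_le m hτκ (mul_le_mul_of_nonneg_left ht.1 hτ)
      ((mul_le_mul_of_nonneg_left ht.2 hτ).trans hτμ)
  have hcont : Continuous fun x ↦ truncExpNeg (m + 1) (τ * x) :=
    (differentiable_truncExpNeg_succ m).continuous.comp (continuous_const_mul τ)
  rw [hA.sum_inv_factorial_smul_pow_eq_cfc, ← cfc_pow _ _ _ hcont.continuousOn]
  refine norm_cfc_le (pow_nonneg ((abs_nonneg _).trans (hbound ⟨le_rfl, hκμ⟩)) k) ?_
  rw [hA.spectrum_real_eq_range_eigenvalues]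
  rintro - ⟨i, rfl⟩
  rw [norm_pow]
  exact pow_le_pow_left₀ (norm_nonneg _) (hbound (heig i)) k

lemma euclNorm_pow_add_mulVec_sub_le {N : ℕ} (g : Matrix (Fin N) (Fin N) ℂ) (u : Fin N → ℂ)
    (k j : ℕ) :
    euclNorm ((g ^ (k + j)) *ᵥ u - (g ^ k) *ᵥ u) ≤ ‖g ^ k‖ * ‖g ^ j - 1‖ * euclNorm u := by
  rw [pow_add, ← Matrix.sub_mulVec, ← mul_sub_one]
  exact ((g ^ k * (g ^ j - 1)).l2_opNorm_mulVec _).trans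
    (mul_le_mul_of_nonneg_right (Matrix.l2_opNorm_mul _ _) (norm_nonneg _))

lemma cauchySeq_pow_mulVec {N : ℕ} {g : Matrix (Fin N) (Fin N) ℂ} {v : ℝ} (hv : v < 1)
    (hpow : ∀ k, ‖g ^ k‖ ≤ v ^ k) (u : Fin N → ℂ) :
    CauchySeq fun k ↦ (WithLp.equiv 2 (Fin N → ℂ)).symm ((g ^ k) *ᵥ u) := by
  refine cauchySeq_of_le_geometric v (‖g ^ 1 - 1‖ * euclNorm u) hv fun k ↦ ?_
  rw [dist_comm, dist_eq_norm]
  calc _ = euclNorm ((g ^ (k + 1)) *ᵥ u - (g ^ k) *ᵥ u) := rfl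
    _ ≤ ‖g ^ k‖ * ‖g ^ 1 - 1‖ * euclNorm u := euclNorm_pow_add_mulVec_sub_le g u k 1
    _ ≤ v ^ k * ‖g ^ 1 - 1‖ * euclNorm u :=
      mul_le_mul_of_nonneg_right (mul_le_mul_of_nonneg_right (hpow k) (norm_nonneg _))
        (norm_nonneg _)
    _ = ‖g ^ 1 - 1‖ * euclNorm u * v ^ k := by ring

/-- Cauchy condition: if `A` is Hermitian with all eigenvalues in `[κ, μ]`, `0 < κ ≤ μ`,
`n ≥ 1` and `0 < τ` with `τ · μ ≤ 1`, set `g = ∑_{k=0}^{n} (1/k!) (−τ A)^k` and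
`v = ∑_{k=0}^{n} (1/k!) (−τ κ)^k`; then `0 ≤ v < 1`, for all `u₀`, `k`, `j` one has
`‖g^{k+j} u₀ − g^k u₀‖ ≤ v^k ‖g^j − I‖₂ ‖u₀‖ ≤ 2 v^k ‖u₀‖`, and `(g^k u₀)_k` is Cauchy. -/
theorem truncated_exp_semigroup_cauchy {N : ℕ} (A : Matrix (Fin N) (Fin N) ℂ)
    (hA : A.IsHermitian) (κ μ : ℝ) (hκ : 0 < κ) (hκμ : κ ≤ μ)
    (heig : ∀ i, hA.eigenvalues i ∈ Set.Icc κ μ)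
    (n : ℕ) (hn : 1 ≤ n) (τ : ℝ) (hτ : 0 < τ) (hτμ : τ * μ ≤ 1)
    (g : Matrix (Fin N) (Fin N) ℂ)
    (hg : g = ∑ k ∈ Finset.range (n + 1), ((Nat.factorial k : ℂ))⁻¹ • ((-(τ : ℂ)) • A) ^ k)
    (v : ℝ) (hv : v = ∑ k ∈ Finset.range (n + 1), (-(τ * κ)) ^ k / (Nat.factorial k : ℝ)) :
    (0 ≤ v ∧ v < 1) ∧
      (∀ (u₀ : Fin N → ℂ) (k j : ℕ),
        euclNorm ((g ^ (k + j)).mulVec u₀ - (g ^ k).mulVec u₀)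
            ≤ v ^ k * ‖g ^ j - 1‖ * euclNorm u₀ ∧
          v ^ k * ‖g ^ j - 1‖ * euclNorm u₀ ≤ 2 * v ^ k * euclNorm u₀) ∧
      ∀ u₀ : Fin N → ℂ,
        CauchySeq fun k : ℕ => (WithLp.equiv 2 (Fin N → ℂ)).symm ((g ^ k).mulVec u₀) := by
  obtain ⟨m, rfl⟩ : ∃ m, n = m + 1 := ⟨n - 1, by omega⟩
  have hτκ : τ * κ ∈ Ioc 0 1 := ⟨mul_pos hτ hκ, (mul_le_mul_of_nonneg_left hκμ hτ.le).trans hτμ⟩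
  have hv0 : 0 ≤ v := hv ▸ (abs_nonneg _).trans (abs_truncExpNeg_succ_le m hτκ.1.le le_rfl hτκ.2)
  have hv1 : v < 1 := hv ▸ truncExpNeg_succ_lt_one m hτκ
  have hpow (k : ℕ) : ‖g ^ k‖ ≤ v ^ k :=
    hg ▸ hv ▸ hA.norm_sum_inv_factorial_smul_pow_pow_le hτ.le hκ.le hκμ hτμ heig m k
  have hgap (j : ℕ) : ‖g ^ j - 1‖ ≤ 2 := by
    have hone : ‖(1 : Matrix (Fin N) (Fin N) ℂ)‖ ≤ 1 := by simpa using hpow 0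
    linarith [norm_sub_le (g ^ j) 1, hpow j, pow_le_one₀ (n := j) hv0 hv1.le]
  refine ⟨⟨hv0, hv1⟩, fun u₀ k j ↦ ⟨?_, ?_⟩, cauchySeq_pow_mulVec hv1 hpow⟩
  · exact (euclNorm_pow_add_mulVec_sub_le g u₀ k j).trans <| mul_le_mul_of_nonneg_right
      (mul_le_mul_of_nonneg_right (hpow k) (norm_nonneg _)) (norm_nonneg _)
  · rw [mul_comm 2 (v ^ k)]
    exact mul_le_mul_of_nonneg_right (mul_le_mul_of_nonneg_left (hgap j) (pow_nonneg hv0 k))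
      (norm_nonneg _)
end

section
/- Let A ∈ ℂ^{N×N} be Hermitian positive semidefinite, let n be a natural number, and let τ ≥ 0 satisfy τ · ‖A‖₂ ≤ 1. Then ‖exp(−τ A) − Σ_{k=0}^{n} (1/k!) (−τ A)^k‖₂ ≤ (τ ‖A‖₂)^{n+1} / (n+1)!, where exp denotes the matrix exponential. -/
open scoped Matrix ComplexOrder Matrix.Norms.L2Operator MatrixOrder

open Finset Nat Set

/-!
Through the continuous functional calculus, the remainder is `f (τ • A)` for the scalar function
`f x = exp (-x) - ∑_{k ≤ n} (-x)^k / k!`, so its norm is at most the supremum of `|f|` on the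
spectrum of `τ • A`, which lies in `[0, τ‖A‖]`. There the Lagrange form of Taylor's theorem gives
`|f x| = exp (-ξ) x^(n+1) / (n+1)! ≤ x^(n+1) / (n+1)!`.
-/

theorem Real.taylorWithinEval_exp_zero (n : ℕ) {s : Set ℝ} (hs : UniqueDiffOn ℝ s) (h0 : 0 ∈ s)
    (x : ℝ) :
    taylorWithinEval Real.exp n s 0 x = ∑ k ∈ range (n + 1), (k ! : ℝ)⁻¹ * x ^ k := by
  simp only [taylor_within_apply, sub_zero, smul_eq_mul,
    iteratedDerivWithin_eq_iteratedDeriv hs Real.contDiff_exp.contDiffAt h0,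
    iteratedDeriv_eq_iterate, Real.iter_deriv_exp, Real.exp_zero, mul_one]

theorem Real.abs_exp_sub_sum_range_le_of_nonpos {x : ℝ} (hx : x ≤ 0) (n : ℕ) :
    |Real.exp x - ∑ k ∈ range (n + 1), (k ! : ℝ)⁻¹ * x ^ k| ≤ |x| ^ (n + 1) / (n + 1)! := by
  rcases hx.eq_or_lt with rfl | hx
  · simp [Finset.sum_range_succ']
  obtain ⟨ξ, hξ, hrem⟩ := taylor_mean_remainder_lagrange_iteratedDeriv (f := Real.exp) (n := n)
    hx.ne' Real.contDiff_exp.contDiffOn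
  rw [Real.taylorWithinEval_exp_zero n (uniqueDiffOn_uIcc hx.ne') left_mem_uIcc] at hrem
  have hξ : ξ < 0 := by rw [uIoo_of_ge hx.le] at hξ; exact hξ.2
  rw [hrem, iteratedDeriv_eq_iterate, Real.iter_deriv_exp, sub_zero, abs_div, abs_mul, abs_pow,
    Real.abs_exp, Nat.abs_cast]
  gcongr
  exact mul_le_of_le_one_left (by positivity) (Real.exp_le_one_iff.mpr hξ.le)

theorem exp_neg_sub_sum_range_eq_cfc {A : Type*} [NormedRing A] [StarRing A] [NormedAlgebra ℝ A]
    [ContinuousFunctionalCalculus ℝ A IsSelfAdjoint] {a : A} (ha : IsSelfAdjoint a) (n : ℕ) :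
    NormedSpace.exp (-a) - ∑ k ∈ range (n + 1), (k ! : ℝ)⁻¹ • (-a) ^ k =
      cfc (fun x : ℝ => Real.exp (-x) - ∑ k ∈ range (n + 1), (k ! : ℝ)⁻¹ * (-x) ^ k) a := by
  have hterm (k : ℕ) : cfc (fun x : ℝ => (k ! : ℝ)⁻¹ * (-x) ^ k) a = (k ! : ℝ)⁻¹ • (-a) ^ k := by
    rw [cfc_const_mul _ _ a, cfc_pow _ _ a, cfc_neg_id a]
  rw [cfc_sub _ _ a, cfc_comp' Real.exp (fun x : ℝ => -x) a, cfc_neg_id a,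
    CFC.real_exp_eq_normedSpace_exp ha.neg, ← Finset.sum_fn, cfc_sum _ a]
  simp only [hterm]

theorem norm_exp_neg_sub_sum_range_le {A : Type*} [CStarAlgebra A] [PartialOrder A]
    [StarOrderedRing A] {a : A} (ha : 0 ≤ a) (n : ℕ) :
    ‖NormedSpace.exp (-a) - ∑ k ∈ range (n + 1), (k ! : ℝ)⁻¹ • (-a) ^ k‖ ≤
      ‖a‖ ^ (n + 1) / (n + 1)! := by
  nontriviality A
  rw [exp_neg_sub_sum_range_eq_cfc ha.isSelfAdjoint]
  refine norm_cfc_le (by positivity) fun x hx => ?_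
  have hx0 : 0 ≤ x := spectrum_nonneg_of_nonneg ha hx
  calc ‖Real.exp (-x) - ∑ k ∈ range (n + 1), (k ! : ℝ)⁻¹ * (-x) ^ k‖
      ≤ |-x| ^ (n + 1) / (n + 1)! :=
        Real.abs_exp_sub_sum_range_le_of_nonpos (neg_nonpos.mpr hx0) n
    _ ≤ ‖a‖ ^ (n + 1) / (n + 1)! := by
      rw [abs_neg, ← Real.norm_eq_abs]
      gcongr
      exact spectrum.norm_le_norm_of_mem hx

theorem matrix_exp_taylor_remainder_general {N : ℕ} (A : Matrix (Fin N) (Fin N) ℂ)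
    (hA : A.PosSemidef) (n : ℕ) (τ : ℝ) (hτ : 0 ≤ τ) :
    ‖NormedSpace.exp ((-(τ : ℂ)) • A)
        - ∑ k ∈ Finset.range (n + 1), ((Nat.factorial k : ℂ))⁻¹ • ((-(τ : ℂ)) • A) ^ k‖
      ≤ (τ * ‖A‖) ^ (n + 1) / (Nat.factorial (n + 1) : ℝ) := by
  have hτA_nonneg : 0 ≤ τ • A := smul_nonneg hτ hA.nonneg
  have := norm_exp_neg_sub_sum_range_le hτA_nonneg n
  rw [norm_smul, Real.norm_of_nonneg hτ] at this
  simpa only [neg_smul, Complex.coe_smul, inv_natCast_smul_eq ℂ ℝ] using this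

/-- If `A` is Hermitian positive semidefinite and `0 ≤ τ` with `τ · ‖A‖₂ ≤ 1`, then
`‖exp(−τ A) − ∑_{k=0}^{n} (1/k!) (−τ A)^k‖₂ ≤ (τ ‖A‖₂)^{n+1} / (n+1)!`. -/
theorem matrix_exp_taylor_remainder {N : ℕ} (A : Matrix (Fin N) (Fin N) ℂ)
    (hA : A.PosSemidef) (n : ℕ) (τ : ℝ) (hτ : 0 ≤ τ) (hτA : τ * ‖A‖ ≤ 1) :
    ‖NormedSpace.exp ((-(τ : ℂ)) • A)
        - ∑ k ∈ Finset.range (n + 1), ((Nat.factorial k : ℂ))⁻¹ • ((-(τ : ℂ)) • A) ^ k‖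
      ≤ (τ * ‖A‖) ^ (n + 1) / (Nat.factorial (n + 1) : ℝ) :=
  matrix_exp_taylor_remainder_general A hA n τ hτ
end

section
/- Let A ∈ ℂ^{N×N} be Hermitian and let τ ≥ 0 satisfy τ · ‖A‖₂ ≤ 1. Then the matrix G_τ = Σ_{k=0}^{3} (1/k!) (i τ A)^k satisfies ‖G_τ‖₂ ≤ 1, and consequently ‖G_τ^{j}‖₂ ≤ 1 for every natural number j. -/
open scoped Matrix Matrix.Norms.L2Operator

/-!
`G_τ = p(iτA)` for the cubic Taylor polynomial `p` of `exp`, so by the continuous functional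
calculus `‖G_τ^j‖` is at most the maximum of `|p(iτλ)|^j` over the (real) eigenvalues `λ` of `A`.
With `t = τλ ∈ [-1, 1]` one computes `|p(it)|² = 1 - t⁴ (3 - t²) / 36 ≤ 1`.
-/

open Polynomial Finset Nat

noncomputable def expPartialSumPoly (n : ℕ) : ℂ[X] :=
  ∑ k ∈ range n, C (k ! : ℂ)⁻¹ * X ^ k

@[simp]
lemma eval_expPartialSumPoly (n : ℕ) (z : ℂ) :
    (expPartialSumPoly n).eval z = ∑ k ∈ range n, (k ! : ℂ)⁻¹ * z ^ k := by
  simp [expPartialSumPoly, eval_finsetSum]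

lemma aeval_expPartialSumPoly {A : Type*} [Ring A] [Algebra ℂ A] (n : ℕ) (a : A) :
    aeval a (expPartialSumPoly n) = ∑ k ∈ range n, (k ! : ℂ)⁻¹ • a ^ k := by
  simp [expPartialSumPoly, Algebra.smul_def]

lemma norm_eval_expPartialSumPoly_four_I_mul_le_one {t : ℝ} (ht : t ^ 2 ≤ 3) :
    ‖(expPartialSumPoly 4).eval (Complex.I * t)‖ ≤ 1 := by
  have hval : (expPartialSumPoly 4).eval (Complex.I * t) =
      ((1 - t ^ 2 / 2 : ℝ) : ℂ) + ((t - t ^ 3 / 6 : ℝ) : ℂ) * Complex.I := by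
    simp only [eval_expPartialSumPoly, sum_range_succ, sum_range_zero, factorial]
    push_cast
    linear_combination ((t : ℂ) ^ 2 / 2 + Complex.I * (t : ℂ) ^ 3 / 6) * Complex.I_sq
  have hsq : (1 - t ^ 2 / 2) ^ 2 + (t - t ^ 3 / 6) ^ 2 ≤ 1 := by
    nlinarith [mul_nonneg (pow_nonneg (sq_nonneg t) 2) (sub_nonneg.2 ht)]
  rw [hval, Complex.norm_add_mul_I]
  exact Real.sqrt_le_one.2 hsq

namespace CStarAlgebra

variable {A : Type*} [CStarAlgebra A]

lemma norm_le_norm_of_mem_spectrum {a : A} {z : ℂ} (hz : z ∈ spectrum ℂ a) : ‖z‖ ≤ ‖a‖ := by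
  cases subsingleton_or_nontrivial A
  · simp [spectrum.of_subsingleton] at hz
  · exact spectrum.norm_le_norm_of_mem hz

lemma norm_aeval_le_one_of_forall_mem_spectrum {a : A} [IsStarNormal a] (p : ℂ[X])
    (hp : ∀ z ∈ spectrum ℂ a, ‖p.eval z‖ ≤ 1) : ‖aeval a p‖ ≤ 1 := by
  rw [← cfc_polynomial p a]
  exact norm_cfc_le zero_le_one hp

end CStarAlgebra

open CStarAlgebra in
/-- If `A` is Hermitian and `0 ≤ τ` with `τ · ‖A‖₂ ≤ 1`, then
`G_τ = ∑_{k=0}^{3} (1/k!) (i τ A)^k` satisfies `‖G_τ‖₂ ≤ 1`, and consequently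
`‖G_τ^j‖₂ ≤ 1` for every natural number `j`. -/
theorem third_order_unitary_approx_norm_le_one {N : ℕ} (A : Matrix (Fin N) (Fin N) ℂ)
    (hA : A.IsHermitian) (τ : ℝ) (hτ : 0 ≤ τ) (hτA : τ * ‖A‖ ≤ 1) :
    ‖∑ k ∈ Finset.range 4, ((Nat.factorial k : ℂ))⁻¹ • ((Complex.I * (τ : ℂ)) • A) ^ k‖ ≤ 1 ∧
      ∀ j : ℕ,
        ‖(∑ k ∈ Finset.range 4, ((Nat.factorial k : ℂ))⁻¹ • ((Complex.I * (τ : ℂ)) • A) ^ k) ^ j‖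
          ≤ 1 := by
  have hsa : IsSelfAdjoint A := hA
  have := hsa.isStarNormal
  set P := (expPartialSumPoly 4).comp (C (Complex.I * τ) * X)
  have hP : aeval A P = ∑ k ∈ range 4, (k ! : ℂ)⁻¹ • ((Complex.I * τ) • A) ^ k := by
    rw [aeval_comp, map_mul, aeval_C, aeval_X, ← Algebra.smul_def, aeval_expPartialSumPoly]
  have hspec : ∀ z ∈ spectrum ℂ A, ‖P.eval z‖ ≤ 1 := by
    intro z hz
    obtain ⟨x, rfl⟩ : ∃ x : ℝ, z = x := ⟨z.re, hsa.mem_spectrum_eq_re hz⟩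
    have hx : |x| ≤ ‖A‖ := by simpa using norm_le_norm_of_mem_spectrum hz
    have hτx : |τ * x| ≤ 1 := by
      rw [abs_mul, abs_of_nonneg hτ]
      exact (mul_le_mul_of_nonneg_left hx hτ).trans hτA
    rw [eval_comp, eval_mul, eval_C, eval_X, mul_assoc, ← Complex.ofReal_mul]
    exact norm_eval_expPartialSumPoly_four_I_mul_le_one
      (by linarith [(sq_le_one_iff_abs_le_one _).2 hτx])
  rw [← hP]
  refine ⟨norm_aeval_le_one_of_forall_mem_spectrum P hspec, fun j => ?_⟩
  rw [← map_pow]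
  refine norm_aeval_le_one_of_forall_mem_spectrum (P ^ j) fun z hz => ?_
  rw [eval_pow, norm_pow]
  exact pow_le_one₀ (norm_nonneg _) (hspec z hz)
end

section
/- Let A ∈ ℂ^{N×N} be Hermitian, let n be a natural number, and let τ ≥ 0. Then ‖exp(i τ A) − Σ_{k=0}^{n} (1/k!) (i τ A)^k‖₂ ≤ (τ ‖A‖₂)^{n+1} / (n+1)!, where exp denotes the matrix exponential and i the imaginary unit. -/
/-!
For `B` in a Banach algebra, the Taylor remainder `R n t = exp (t • B) - ∑_{k<n} (t • B)^k / k!`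
satisfies `R (n + 1) 0 = 0` and `(R (n + 1))' = B * R n`. Hence, as soon as `‖exp (t • B)‖ ≤ 1`
for `t ≥ 0`, the comparison principle for derivatives gives `‖R n t‖ ≤ (t ‖B‖)^n / n!` by
induction on `n`. For `B = I • A` with `A` Hermitian, `exp (t • B)` is unitary.
-/

open scoped Matrix Matrix.Norms.L2Operator
open scoped Nat
open NormedSpace

theorem hasDerivAt_pow_succ_div_factorial (k : ℕ) (x : ℝ) :
    HasDerivAt (fun x : ℝ => x ^ (k + 1) / (k + 1)!) (x ^ k / k !) x := by
  refine ((hasDerivAt_pow (k + 1) x).div_const _).congr_deriv ?_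
  rw [Nat.factorial_succ, Nat.cast_mul, Nat.add_sub_cancel]
  field_simp

section

variable {𝔸 : Type*} [NormedRing 𝔸] [NormedAlgebra ℝ 𝔸]

theorem hasDerivAt_factorial_inv_smul_smul_pow_succ (B : 𝔸) (k : ℕ) (t : ℝ) :
    HasDerivAt (fun t : ℝ => ((k + 1)! : ℝ)⁻¹ • (t • B) ^ (k + 1))
      (B * ((k ! : ℝ)⁻¹ • (t • B) ^ k)) t := by
  simp only [smul_pow, smul_smul, inv_mul_eq_div, mul_smul_comm, ← pow_succ']
  exact (hasDerivAt_pow_succ_div_factorial k t).smul_const (B ^ (k + 1))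

theorem hasDerivAt_sum_range_succ_factorial_inv_smul_smul_pow (B : 𝔸) (n : ℕ) (t : ℝ) :
    HasDerivAt (fun t : ℝ => ∑ k ∈ Finset.range (n + 1), (k ! : ℝ)⁻¹ • (t • B) ^ k)
      (B * ∑ k ∈ Finset.range n, (k ! : ℝ)⁻¹ • (t • B) ^ k) t := by
  induction n with
  | zero => simpa using hasDerivAt_const t (1 : 𝔸)
  | succ n ih =>
    rw [Finset.sum_range_succ _ n, mul_add]
    simp only [Finset.sum_range_succ _ (n + 1)]
    exact ih.fun_add (hasDerivAt_factorial_inv_smul_smul_pow_succ B n t)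

noncomputable def expTaylorRemainder (B : 𝔸) (n : ℕ) (t : ℝ) : 𝔸 :=
  exp (t • B) - ∑ k ∈ Finset.range n, (k ! : ℝ)⁻¹ • (t • B) ^ k

theorem expTaylorRemainder_succ_zero (B : 𝔸) (n : ℕ) : expTaylorRemainder B (n + 1) 0 = 0 := by
  simp [expTaylorRemainder, Finset.sum_range_succ']

variable [CompleteSpace 𝔸]

theorem hasDerivAt_expTaylorRemainder_succ (B : 𝔸) (n : ℕ) (t : ℝ) :
    HasDerivAt (expTaylorRemainder B (n + 1)) (B * expTaylorRemainder B n t) t := by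
  rw [expTaylorRemainder, mul_sub]
  exact (hasDerivAt_exp_smul_const' B t).sub
    (hasDerivAt_sum_range_succ_factorial_inv_smul_smul_pow B n t)

theorem norm_expTaylorRemainder_le (B : 𝔸) (hB : ∀ t : ℝ, 0 ≤ t → ‖exp (t • B)‖ ≤ 1) (n : ℕ)
    {t : ℝ} (ht : 0 ≤ t) : ‖expTaylorRemainder B n t‖ ≤ (t * ‖B‖) ^ n / n ! := by
  induction n generalizing t with
  | zero => simpa [expTaylorRemainder] using hB t ht
  | succ n ih =>
    have hbound (s : ℝ) : HasDerivAt (fun s : ℝ => (s * ‖B‖) ^ (n + 1) / (n + 1)!)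
        (‖B‖ * ((s * ‖B‖) ^ n / n !)) s := by
      exact ((hasDerivAt_pow_succ_div_factorial n (s * ‖B‖)).comp s
        (hasDerivAt_mul_const ‖B‖)).congr_deriv (mul_comm _ _)
    refine image_norm_le_of_norm_deriv_right_le_deriv_boundary
      (HasDerivAt.continuousOn fun s _ => hasDerivAt_expTaylorRemainder_succ B n s)
      (fun s _ => (hasDerivAt_expTaylorRemainder_succ B n s).hasDerivWithinAt)
      (by simp [expTaylorRemainder_succ_zero]) hbound
      (fun s hs => (norm_mul_le _ _).trans (by gcongr; exact ih hs.1)) ⟨ht, le_rfl⟩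

theorem norm_exp_smul_le_one_of_mem_skewAdjoint [StarRing 𝔸] [CStarRing 𝔸] [StarModule ℝ 𝔸]
    {B : 𝔸} (hB : B ∈ skewAdjoint 𝔸) (t : ℝ) : ‖exp (t • B)‖ ≤ 1 := by
  nontriviality 𝔸
  let : NormedAlgebra ℚ 𝔸 := NormedAlgebra.restrictScalars ℚ ℝ 𝔸
  exact (CStarRing.norm_of_mem_unitary
    (exp_mem_unitary_of_mem_skewAdjoint (skewAdjoint.smul_mem t hB))).le

end

/-- If `A` is Hermitian, `n` is a natural number and `τ ≥ 0`, then
`‖exp(i τ A) − ∑_{k=0}^{n} (1/k!) (i τ A)^k‖₂ ≤ (τ ‖A‖₂)^{n+1} / (n+1)!`. -/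
theorem matrix_exp_I_taylor_remainder {N : ℕ} (A : Matrix (Fin N) (Fin N) ℂ)
    (hA : A.IsHermitian) (n : ℕ) (τ : ℝ) (hτ : 0 ≤ τ) :
    ‖NormedSpace.exp ((Complex.I * (τ : ℂ)) • A)
        - ∑ k ∈ Finset.range (n + 1), ((Nat.factorial k : ℂ))⁻¹ • ((Complex.I * (τ : ℂ)) • A) ^ k‖
      ≤ (τ * ‖A‖) ^ (n + 1) / (Nat.factorial (n + 1) : ℝ) := by
  have hB : Complex.I • A ∈ skewAdjoint _ :=
    (Matrix.isHermitian_iff_isSelfAdjoint.mp hA).I_smul_mem_skewAdjoint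
  have hsmul : (Complex.I * (τ : ℂ)) • A = τ • (Complex.I • A) := by
    rw [mul_comm, mul_smul, Complex.coe_smul]
  have hcoeff (k : ℕ) (X : Matrix (Fin N) (Fin N) ℂ) : ((k ! : ℂ))⁻¹ • X = ((k ! : ℝ))⁻¹ • X := by
    rw [← Complex.coe_smul]; push_cast; rfl
  have hremainder := norm_expTaylorRemainder_le _
    (fun (t : ℝ) _ => norm_exp_smul_le_one_of_mem_skewAdjoint hB t) (n + 1) hτ
  simpa [expTaylorRemainder, hsmul, hcoeff, norm_smul] using hremainder
end

section
/- Let A ∈ ℂ^{N×N} be Hermitian and let τ ≥ 0 satisfy τ · ‖A‖₂ ≤ 1. Set G_τ = Σ_{j=0}^{3} (1/j!) (i τ A)^j. Then for every natural number k: ‖exp(i k τ A) − G_τ^{k}‖₂ ≤ k · (τ ‖A‖₂)^{4} / 24, where exp denotes the matrix exponential and i the imaginary unit. -/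
open scoped Matrix Matrix.Norms.L2Operator

/-!
Since `A` is self-adjoint, the continuous functional calculus reduces the inequality to the
scalar one `|e^{ikx} - g(x)^k| ≤ k x⁴/24` for real `|x| ≤ 1`, where `g(x) = ∑_{j<4} (ix)^j/j!`.
Both `e^{ix}` and `g(x)` lie in the closed unit disc (`|g(x)|² = 1 - x⁴/12 + x⁶/36`), so
`|e^{ikx} - g(x)^k| ≤ k |e^{ix} - g(x)|`, and the Taylor remainder of `t ↦ e^{it}` after the
cubic term is at most `|x|⁴/4!` because every derivative of `t ↦ e^{it}` has modulus one.
-/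

open Complex ComplexConjugate Finset
open scoped Nat

theorem norm_pow_sub_pow_le {R : Type*} [SeminormedRing R] [NormOneClass R] {a b : R}
    (ha : ‖a‖ ≤ 1) (hb : ‖b‖ ≤ 1) (n : ℕ) : ‖a ^ n - b ^ n‖ ≤ n * ‖a - b‖ := by
  induction n with
  | zero => simp
  | succ n ih =>
    have hbn : ‖b ^ n‖ ≤ 1 := (norm_pow_le _ n).trans (pow_le_one₀ (norm_nonneg b) hb)
    calc ‖a ^ (n + 1) - b ^ (n + 1)‖ = ‖a * (a ^ n - b ^ n) + (a - b) * b ^ n‖ := by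
          rw [pow_succ', pow_succ']; noncomm_ring
      _ ≤ ‖a‖ * ‖a ^ n - b ^ n‖ + ‖a - b‖ * ‖b ^ n‖ :=
          (norm_add_le _ _).trans (add_le_add (norm_mul_le _ _) (norm_mul_le _ _))
      _ ≤ 1 * (n * ‖a - b‖) + ‖a - b‖ * 1 := by gcongr
      _ = (n + 1 : ℕ) * ‖a - b‖ := by push_cast; ring

noncomputable def expPartialSum (n : ℕ) (z : ℂ) : ℂ :=
  ∑ j ∈ range n, (j ! : ℂ)⁻¹ * z ^ j

@[fun_prop]
theorem continuous_expPartialSum (n : ℕ) : Continuous (expPartialSum n) := by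
  unfold expPartialSum; fun_prop

theorem expPartialSum_succ_zero (n : ℕ) : expPartialSum (n + 1) 0 = 1 := by
  simp [expPartialSum, sum_range_succ']

theorem expPartialSum_conj (n : ℕ) (z : ℂ) :
    expPartialSum n (conj z) = conj (expPartialSum n z) := by
  simp [expPartialSum]

theorem hasDerivAt_expPartialSum_succ (n : ℕ) (z : ℂ) :
    HasDerivAt (expPartialSum (n + 1)) (expPartialSum n z) z := by
  induction n with
  | zero => unfold expPartialSum; simpa using hasDerivAt_const z (1 : ℂ)
  | succ n ih =>
    unfold expPartialSum at ih ⊢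
    simp only [sum_range_succ _ (n + 1)]
    refine (ih.add ((hasDerivAt_pow (n + 1) z).const_mul ((n + 1)! : ℂ)⁻¹)).congr_deriv ?_
    rw [sum_range_succ, Nat.factorial_succ]
    push_cast
    field_simp

theorem norm_exp_I_mul_sub_expPartialSum_le_of_nonneg (n : ℕ) {x : ℝ} (hx : 0 ≤ x) :
    ‖exp (I * x) - expPartialSum n (I * x)‖ ≤ x ^ n / n ! := by
  induction n generalizing x with
  | zero => simp [expPartialSum, norm_exp_I_mul_ofReal]
  | succ n ih =>
    have hI (t : ℝ) : HasDerivAt (fun t : ℝ => I * t) I t := by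
      simpa using (hasDerivAt_id t).ofReal_comp.const_mul I
    have hf (t : ℝ) : HasDerivAt (fun t : ℝ => exp (I * t) - expPartialSum (n + 1) (I * t))
        ((exp (I * t) - expPartialSum n (I * t)) * I) t := by
      rw [sub_mul]
      exact ((hasDerivAt_exp _).comp t (hI t)).sub
        ((hasDerivAt_expPartialSum_succ n _).comp t (hI t))
    have hB (t : ℝ) : HasDerivAt (fun t : ℝ => t ^ (n + 1) / (n + 1)!) (t ^ n / n !) t := by
      refine ((hasDerivAt_pow (n + 1) t).div_const ((n + 1)! : ℝ)).congr_deriv ?_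
      rw [Nat.factorial_succ]; push_cast; field_simp
    refine image_norm_le_of_norm_deriv_right_le_deriv_boundary
      (fun t _ => (hf t).continuousAt.continuousWithinAt) (fun t _ => (hf t).hasDerivWithinAt)
      (by simp [expPartialSum_succ_zero]) hB (fun t ht => ?_) ⟨hx, le_rfl⟩
    rw [norm_mul, norm_I, mul_one]
    exact ih ht.1

theorem norm_exp_I_mul_sub_expPartialSum_le (n : ℕ) (x : ℝ) :
    ‖exp (I * x) - expPartialSum n (I * x)‖ ≤ |x| ^ n / n ! := by
  rcases le_total 0 x with hx | hx
  · simpa [abs_of_nonneg hx] using norm_exp_I_mul_sub_expPartialSum_le_of_nonneg n hx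
  · have h := norm_exp_I_mul_sub_expPartialSum_le_of_nonneg n (neg_nonneg.2 hx)
    rwa [show I * ((-x : ℝ) : ℂ) = conj (I * x) by simp, exp_conj, expPartialSum_conj,
      ← map_sub, RCLike.norm_conj, ← abs_of_nonpos hx] at h

theorem norm_expPartialSum_four_I_mul_le_one {x : ℝ} (hx : x ^ 2 ≤ 3) :
    ‖expPartialSum 4 (I * x)‖ ≤ 1 := by
  have h : expPartialSum 4 (I * x) =
      ((1 - x ^ 2 / 2 : ℝ) : ℂ) + ((x - x ^ 3 / 6 : ℝ) : ℂ) * I := by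
    simp only [expPartialSum, sum_range_succ, sum_range_zero, Nat.factorial]
    push_cast
    ring_nf
    rw [I_sq, show I ^ 3 = -I by rw [pow_succ, I_sq]; ring]
    ring
  rw [h, norm_def, normSq_add_mul_I, Real.sqrt_le_one]
  nlinarith [pow_nonneg (sq_nonneg x) 2]

theorem norm_exp_I_mul_nat_mul_sub_expPartialSum_four_pow_le {x : ℝ} (hx : |x| ≤ 1) (k : ℕ) :
    ‖exp (I * k * x) - expPartialSum 4 (I * x) ^ k‖ ≤ k * x ^ 4 / 24 := by
  have hx2 : x ^ 2 ≤ 3 := by nlinarith [sq_abs x, abs_nonneg x]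
  have hexp : exp (I * k * x) = exp (I * x) ^ k := by
    rw [← exp_nat_mul]; ring_nf
  calc ‖exp (I * k * x) - expPartialSum 4 (I * x) ^ k‖
      ≤ k * ‖exp (I * x) - expPartialSum 4 (I * x)‖ := by
        rw [hexp]
        exact norm_pow_sub_pow_le (norm_exp_I_mul_ofReal x).le
          (norm_expPartialSum_four_I_mul_le_one hx2) k
    _ ≤ k * (|x| ^ 4 / 4 !) := by gcongr; exact norm_exp_I_mul_sub_expPartialSum_le 4 x
    _ = k * x ^ 4 / 24 := by rw [Even.pow_abs (by decide)]; norm_num [Nat.factorial]; ring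

theorem cfc_expPartialSum_const_mul {A : Type*} [CStarAlgebra A] (a : A) [IsStarNormal a]
    (n : ℕ) (r : ℂ) :
    cfc (fun z : ℂ => expPartialSum n (r * z)) a =
      ∑ j ∈ range n, (j ! : ℂ)⁻¹ • (r • a) ^ j := by
  simp only [expPartialSum]
  rw [← Finset.sum_fn, cfc_sum ..]
  refine Finset.sum_congr rfl fun j _ => ?_
  rw [cfc_const_mul .., cfc_comp_const_mul r (· ^ j) a, cfc_pow_id ..]

theorem norm_exp_I_mul_smul_sub_expPartialSum_four_pow_le {A : Type*} [CStarAlgebra A]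
    {a : A} (ha : IsSelfAdjoint a) {τ : ℝ} (hτ : 0 ≤ τ) (hτa : τ * ‖a‖ ≤ 1) (k : ℕ) :
    ‖NormedSpace.exp ((I * (k : ℂ) * (τ : ℂ)) • a)
        - (∑ j ∈ range 4, (j ! : ℂ)⁻¹ • ((I * (τ : ℂ)) • a) ^ j) ^ k‖
      ≤ k * (τ * ‖a‖) ^ 4 / 24 := by
  have := ha.isStarNormal
  nontriviality A
  have hcfc : NormedSpace.exp ((I * (k : ℂ) * (τ : ℂ)) • a)
        - (∑ j ∈ range 4, (j ! : ℂ)⁻¹ • ((I * (τ : ℂ)) • a) ^ j) ^ k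
      = cfc (fun z : ℂ => exp (I * k * τ * z) - expPartialSum 4 (I * τ * z) ^ k) a := by
    rw [cfc_sub .., cfc_pow .., cfc_expPartialSum_const_mul,
      cfc_comp_const_mul (I * (k : ℂ) * τ) exp a, exp_eq_exp_ℂ, CFC.exp_eq_normedSpace_exp]
  rw [hcfc]
  refine norm_cfc_le (by positivity) fun z hz => ?_
  rw [ha.mem_spectrum_eq_re hz]
  have hτz : |τ * z.re| ≤ τ * ‖a‖ := by
    rw [abs_mul, abs_of_nonneg hτ]
    gcongr
    exact (abs_re_le_norm z).trans (spectrum.norm_le_norm_of_mem hz)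
  calc ‖exp (I * k * τ * z.re) - expPartialSum 4 (I * τ * z.re) ^ k‖
      = ‖exp (I * k * ↑(τ * z.re)) - expPartialSum 4 (I * ↑(τ * z.re)) ^ k‖ := by
        push_cast; ring_nf
    _ ≤ k * (τ * z.re) ^ 4 / 24 :=
        norm_exp_I_mul_nat_mul_sub_expPartialSum_four_pow_le (hτz.trans hτa) k
    _ ≤ k * (τ * ‖a‖) ^ 4 / 24 := by
        gcongr k * ?_ / 24
        rw [← Even.pow_abs (by decide)]
        exact pow_le_pow_left₀ (abs_nonneg _) hτz 4

/-- If `A` is Hermitian, `0 ≤ τ` with `τ · ‖A‖₂ ≤ 1`, and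
`G_τ = ∑_{j=0}^{3} (1/j!) (i τ A)^j`, then for every natural number `k`,
`‖exp(i k τ A) − G_τ^k‖₂ ≤ k (τ ‖A‖₂)^4 / 24`. -/
theorem matrix_exp_I_pow_taylor_remainder {N : ℕ} (A : Matrix (Fin N) (Fin N) ℂ)
    (hA : A.IsHermitian) (τ : ℝ) (hτ : 0 ≤ τ) (hτA : τ * ‖A‖ ≤ 1) :
    ∀ k : ℕ,
      ‖NormedSpace.exp ((Complex.I * (k : ℂ) * (τ : ℂ)) • A)
          - (∑ j ∈ Finset.range 4, ((Nat.factorial j : ℂ))⁻¹ • ((Complex.I * (τ : ℂ)) • A) ^ j) ^ k‖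
        ≤ (k : ℝ) * (τ * ‖A‖) ^ 4 / 24 :=
  norm_exp_I_mul_smul_sub_expPartialSum_four_pow_le hA.isSelfAdjoint hτ hτA
end
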